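/- arXiv:math/0511642 — 3 statements merged into one kernel-verified Lean document; each statement's English description precedes it below -/
import Mathlib

section
/- Let M be a nonzero finite-dimensional A-module. Then the R-linear endomorphism of M̃ = R ⊗_k M given by the action of the generic element Id = Σ_{i=1}^d x_i ⊗ f_i is injective; consequently 0 → M̃ → M̃ → F_1(M) → 0 is a short exact sequence of R-modules. -/
open TensorProduct

noncomputable section FlCore

variable (k : Type) [Field k] {A : Type} [Ring A] [Algebra k A]

/-- The ring of polynomial functions on `A^l`, w.r.t. a basis of `A` indexed by `Fin d`. -/
abbrev polyR (k : Type) [Field k] (d l : ℕ) : Type := MvPolynomial (Fin d × Fin l) k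

variable {M : Type}
  [AddCommGroup M] [Module k M] [Module A M] [IsScalarTower k A M]

/-- The `k`-linear action of `a : A` on an `A`-module. -/
def actL (a : A) : M →ₗ[k] M := Algebra.lsmul k k M a

variable {d l : ℕ} (b : Module.Basis (Fin d) k A)

/-- The generic element `Id_j = ∑ i, x_{ij} ⊗ f_i` acting `R`-linearly on `M̃ = R ⊗[k] M`. -/
def genId (j : Fin l) :
    polyR k d l ⊗[k] M →ₗ[polyR k d l] polyR k d l ⊗[k] M :=
  ∑ i : Fin d, (MvPolynomial.X (i, j) : polyR k d l) •
    LinearMap.baseChange (polyR k d l) (actL k (b i) : M →ₗ[k] M)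

/-- The submodule `Id_1·M̃ + ⋯ + Id_l·M̃` of `M̃ = R ⊗[k] M`, so that
`F_l(M) = M̃ ⧸ genSub`. -/
def genSub : Submodule (polyR k d l) (polyR k d l ⊗[k] M) :=
  ⨆ j : Fin l, LinearMap.range (genId k b (M := M) j)

end FlCore

/-!
Evaluating the matrix of the generic element `Id = ∑ i, x_i ⊗ f_i` at the coordinates of an
element `a : A` gives the matrix of the action of `a`. At `a = 1` this is the identity, so the
determinant of `Id` is a nonzero polynomial, and over the domain `R` an endomorphism of a free
module with nonzero determinant is injective.
-/

open Module

theorem LinearMap.injective_of_det_toMatrix_ne_zero {R N ι : Type*} [CommRing R]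
    [NoZeroDivisors R] [AddCommGroup N] [Module R N] [Fintype ι] [DecidableEq ι]
    (v : Basis ι R N) {f : N →ₗ[R] N} (hf : (LinearMap.toMatrix v v f).det ≠ 0) :
    Function.Injective f := by
  intro x y hxy
  have hrepr : ⇑(v.repr x) = ⇑(v.repr y) := by
    apply Matrix.mulVec_injective_of_det_ne_zero hf
    rw [LinearMap.toMatrix_mulVec_repr, LinearMap.toMatrix_mulVec_repr, hxy]
  exact v.repr.injective (Finsupp.ext (congrFun hrepr))

section GenericElement

variable (k : Type) [Field k] {A : Type} [Ring A] [Algebra k A]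
  {M : Type} [AddCommGroup M] [Module k M] [Module A M] [IsScalarTower k A M]
  {d l : ℕ} (b : Basis (Fin d) k A)

theorem actL_sum_smul {ι : Type*} (s : Finset ι) (c : ι → k) (a : ι → A) :
    actL k (∑ i ∈ s, c i • a i) = ∑ i ∈ s, c i • (actL k (a i) : M →ₗ[k] M) := by
  simp only [actL, map_sum, map_smul]

theorem actL_one : (actL k (1 : A) : M →ₗ[k] M) = LinearMap.id :=
  map_one (Algebra.lsmul k k M)

variable [Module.Finite k M]

theorem toMatrix_genId (j : Fin l) :
    LinearMap.toMatrix (Algebra.TensorProduct.basis (polyR k d l) (finBasis k M))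
        (Algebra.TensorProduct.basis (polyR k d l) (finBasis k M)) (genId k b (M := M) j) =
      ∑ i, (MvPolynomial.X (i, j) : polyR k d l) •
        (LinearMap.toMatrix (finBasis k M) (finBasis k M) (actL k (b i))).map
          (algebraMap k (polyR k d l)) := by
  simp only [genId, map_sum, map_smul, LinearMap.toMatrix_baseChange]

theorem toMatrix_genId_map_eval (j : Fin l) (c : Fin d × Fin l → k) :
    (LinearMap.toMatrix (Algebra.TensorProduct.basis (polyR k d l) (finBasis k M))
        (Algebra.TensorProduct.basis (polyR k d l) (finBasis k M)) (genId k b (M := M) j)).map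
        (MvPolynomial.eval c) =
      LinearMap.toMatrix (finBasis k M) (finBasis k M) (actL k (∑ i, c (i, j) • b i)) := by
  ext p q
  simp [toMatrix_genId, actL_sum_smul, Matrix.sum_apply, MvPolynomial.eval_X]

theorem det_toMatrix_genId_ne_zero (j : Fin l) :
    (LinearMap.toMatrix (Algebra.TensorProduct.basis (polyR k d l) (finBasis k M))
      (Algebra.TensorProduct.basis (polyR k d l) (finBasis k M))
      (genId k b (M := M) j)).det ≠ 0 := by
  intro hdet
  have heval := congrArg (MvPolynomial.eval fun p : Fin d × Fin l => b.repr 1 p.1) hdet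
  rw [RingHom.map_det, RingHom.mapMatrix_apply, toMatrix_genId_map_eval, b.sum_repr,
    actL_one, LinearMap.toMatrix_id, Matrix.det_one, map_zero] at heval
  exact one_ne_zero heval

theorem genId_injective (j : Fin l) : Function.Injective (genId k b (M := M) j) :=
  LinearMap.injective_of_det_toMatrix_ne_zero _ (det_toMatrix_genId_ne_zero k b j)

end GenericElement

theorem genSub_eq_range_genId (k : Type) [Field k] {A : Type} [Ring A] [Algebra k A]
    {M : Type} [AddCommGroup M] [Module k M] [Module A M] [IsScalarTower k A M]
    {d : ℕ} (b : Basis (Fin d) k A) :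
    genSub k (l := 1) b (M := M) = LinearMap.range (genId k b (M := M) (l := 1) 0) := by
  rw [genSub, iSup_unique]
  rfl

theorem statement0_general (k : Type) [Field k] {A : Type} [Ring A] [Algebra k A]
    {d : ℕ} (b : Module.Basis (Fin d) k A)
    (M : Type) [AddCommGroup M] [Module k M] [Module A M] [IsScalarTower k A M]
    [Module.Finite k M] :
    Function.Injective (genId k b (M := M) (l := 1) 0) ∧
    Function.Exact (genId k b (M := M) (l := 1) 0)
      (Submodule.mkQ (genSub k (l := 1) b (M := M))) ∧
    Function.Surjective (Submodule.mkQ (genSub k (l := 1) b (M := M))) := by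
  refine ⟨genId_injective k b 0, ?_, Submodule.mkQ_surjective _⟩
  rw [genSub_eq_range_genId]
  exact LinearMap.exact_map_mkQ_range _

/-- For a nonzero finite-dimensional module `M` over a finite-dimensional
unital `k`-algebra `A` (with basis `b`), the action of the generic element
`Id = ∑ i, x_i ⊗ f_i` on `M̃ = R ⊗[k] M` is injective; consequently
`0 → M̃ → M̃ → F_1(M) → 0` is a short exact sequence of `R`-modules. -/
theorem statement0 (k : Type) [Field k] {A : Type} [Ring A] [Algebra k A]
    {d : ℕ} (b : Module.Basis (Fin d) k A)
    (M : Type) [AddCommGroup M] [Module k M] [Module A M] [IsScalarTower k A M]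
    [Module.Finite k M] [Nontrivial M] :
    Function.Injective (genId k b (M := M) (l := 1) 0) ∧
    Function.Exact (genId k b (M := M) (l := 1) 0)
      (Submodule.mkQ (genSub k (l := 1) b (M := M))) ∧
    Function.Surjective (Submodule.mkQ (genSub k (l := 1) b (M := M))) :=
  statement0_general k b M
end

section
/- For every integer l ≥ 1 and all finite-dimensional A-modules M and N, the natural map from Hom_A(M,N) to the space of degree-0 graded R-module homomorphisms F_l(M) → F_l(N), sending f to F_l(f), is a bijection; that is, F_l is a fully faithful functor from finite-dimensional A-modules to graded R-modules with degree-0 homomorphisms. -/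
open TensorProduct

noncomputable section FlCore

variable (k : Type) [Field k] {A : Type} [Ring A] [Algebra k A]

variable {M N : Type}
  [AddCommGroup M] [Module k M] [Module A M] [IsScalarTower k A M]
  [AddCommGroup N] [Module k N] [Module A N] [IsScalarTower k A N]

variable {d l : ℕ} (b : Module.Basis (Fin d) k A)

/-- Restriction of scalars of an `A`-linear map to a `k`-linear map. -/
def restrictK (f : M →ₗ[A] N) : M →ₗ[k] N where
  toFun := f
  map_add' := map_add f
  map_smul' c m := by
    show f (c • m) = c • f m
    rw [← algebraMap_smul A c m, map_smul, algebraMap_smul]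

/-- The induced degree-0 graded homomorphism `F_l(M) → F_l(N)`. -/
def Fmap (f : M →ₗ[A] N) :
    (polyR k d l ⊗[k] M ⧸ genSub k (l := l) b (M := M)) →ₗ[polyR k d l]
      (polyR k d l ⊗[k] N ⧸ genSub k (l := l) b (M := N)) :=
  Submodule.mapQ _ _ (LinearMap.baseChange (polyR k d l) (restrictK k f)) (by
    refine iSup_le fun j => ?_
    rintro x ⟨y, rfl⟩
    refine Submodule.mem_iSup_of_mem j ⟨LinearMap.baseChange (polyR k d l) (restrictK k f) y, ?_⟩
    have hc : ∀ i : Fin d,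
        (LinearMap.baseChange (polyR k d l) (actL k (b i) : N →ₗ[k] N)).comp
          (LinearMap.baseChange (polyR k d l) (restrictK k f))
        = (LinearMap.baseChange (polyR k d l) (restrictK k f)).comp
          (LinearMap.baseChange (polyR k d l) (actL k (b i) : M →ₗ[k] M)) := by
      intro i
      rw [← LinearMap.baseChange_comp, ← LinearMap.baseChange_comp]
      congr 1
      ext m
      show (b i) • (f m) = f ((b i) • m)
      rw [map_smul]
    have : ∀ z, (genId k b (M := N) j) (LinearMap.baseChange (polyR k d l) (restrictK k f) z)
        = LinearMap.baseChange (polyR k d l) (restrictK k f) ((genId k b (M := M) j) z) := by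
      intro z
      simp only [genId, LinearMap.sum_apply, LinearMap.smul_apply, map_sum, map_smul]
      refine Finset.sum_congr rfl fun i _ => ?_
      congr 1
      have := DFunLike.congr_fun (hc i) z
      simpa using this
    exact this y)

end FlCore

noncomputable section Graded

variable (k : Type) [Field k] {A : Type} [Ring A] [Algebra k A]
variable {M N : Type}
  [AddCommGroup M] [Module k M] [Module A M] [IsScalarTower k A M]
  [AddCommGroup N] [Module k N] [Module A N] [IsScalarTower k A N]
variable {d l : ℕ} (b : Module.Basis (Fin d) k A)

/-- The degree-`m` homogeneous component of `F_l(M)`, namely the `k`-subspace spanned by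
the images of the pure tensors `p ⊗ v` with `p` a homogeneous polynomial of degree `m`. -/
def flComp (m : ℕ) :
    Submodule k (polyR k d l ⊗[k] M ⧸ genSub k (l := l) b (M := M)) :=
  Submodule.span k
    ((Submodule.mkQ (genSub k (l := l) b (M := M))) ''
      {x | ∃ (p : polyR k d l) (v : M),
        p ∈ MvPolynomial.homogeneousSubmodule (Fin d × Fin l) k m ∧ x = p ⊗ₜ[k] v})

/-- A homomorphism `F_l(M) → F_l(N)` is graded of degree `0` if it maps each homogeneous
component of degree `m` into the homogeneous component of degree `m`. -/
def IsGradedDegZero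
    (φ : (polyR k d l ⊗[k] M ⧸ genSub k (l := l) b (M := M)) →ₗ[polyR k d l]
      (polyR k d l ⊗[k] N ⧸ genSub k (l := l) b (M := N))) : Prop :=
  ∀ (m : ℕ), ∀ x ∈ flComp k b (M := M) m, φ x ∈ flComp k b (M := N) m

end Graded

/-!
The relations `Id_j · M̃` have no constant term, so `m ↦ [1 ⊗ m]` identifies `M` with the
degree-0 part of `F_l(M)`, which generates `F_l(M)` over `R`. A degree-0 homomorphism `φ` therefore
restricts to a `k`-linear map `g : M → N` that determines it. Applying `φ` to the relation
`∑ i, x_{i1} [1 ⊗ f_i m] = 0` and reading off the coefficient of each `x_{i1}` gives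
`g (f_i m) - f_i g m = f_i n` for a single `n ∈ N`; expanding `1 = ∑ i, c_i f_i` then gives
`n = g m - g m = 0`, so `g` is `A`-linear.
-/

open MvPolynomial

namespace MvPolynomial

variable {σ R M N : Type*} [CommSemiring R] [AddCommMonoid M] [Module R M]
  [AddCommMonoid N] [Module R N]

noncomputable def tensorCoeff (s : σ →₀ ℕ) : MvPolynomial σ R ⊗[R] M →ₗ[R] M :=
  TensorProduct.lid R M ∘ₗ (lcoeff R s).rTensor M

@[simp]
theorem tensorCoeff_tmul (s : σ →₀ ℕ) (p : MvPolynomial σ R) (m : M) :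
    tensorCoeff s (p ⊗ₜ m) = coeff s p • m := by
  simp [tensorCoeff]

theorem tensorCoeff_baseChange (s : σ →₀ ℕ) (f : M →ₗ[R] N) (x : MvPolynomial σ R ⊗[R] M) :
    tensorCoeff s (f.baseChange _ x) = f (tensorCoeff s x) := by
  induction x using TensorProduct.induction_on with
  | zero => simp
  | tmul p m => simp
  | add x y hx hy => simp [hx, hy]

theorem tensorCoeff_X_smul [DecidableEq σ] (s : σ →₀ ℕ) (e : σ) (x : MvPolynomial σ R ⊗[R] M) :
    tensorCoeff s ((X e : MvPolynomial σ R) • x) =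
      if e ∈ s.support then tensorCoeff (s - Finsupp.single e 1) x else 0 := by
  induction x using TensorProduct.induction_on with
  | zero => simp
  | tmul p m =>
    rw [TensorProduct.smul_tmul', tensorCoeff_tmul, smul_eq_mul, coeff_X_mul']
    split <;> simp
  | add x y hx hy =>
    rw [smul_add, map_add, hx, hy]
    split <;> simp

theorem tensorCoeff_zero_X_smul (e : σ) (x : MvPolynomial σ R ⊗[R] M) :
    tensorCoeff 0 ((X e : MvPolynomial σ R) • x) = 0 := by
  classical
  simp [tensorCoeff_X_smul]

theorem tensorCoeff_single_X_smul [DecidableEq σ] (e e' : σ) (x : MvPolynomial σ R ⊗[R] M) :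
    tensorCoeff (Finsupp.single e' 1) ((X e : MvPolynomial σ R) • x) =
      if e = e' then tensorCoeff 0 x else 0 := by
  rw [tensorCoeff_X_smul, Finsupp.support_single _ one_ne_zero]
  by_cases h : e = e' <;> simp [h]

end MvPolynomial

theorem Module.Basis.sum_repr_smul_smul {k A M ι : Type*} [CommSemiring k] [Semiring A]
    [Algebra k A] [AddCommMonoid M] [Module k M] [Module A M] [IsScalarTower k A M] [Fintype ι]
    (b : Module.Basis ι k A) (a : A) (m : M) : ∑ i, b.repr a i • b i • m = a • m := by
  simp_rw [← smul_assoc, ← Finset.sum_smul, b.sum_repr]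

theorem LinearMap.map_smul_of_map_basis_smul {k A M N ι : Type*} [CommSemiring k] [Semiring A]
    [Algebra k A] [AddCommMonoid M] [Module k M] [Module A M] [IsScalarTower k A M]
    [AddCommMonoid N] [Module k N] [Module A N] [IsScalarTower k A N] [Fintype ι]
    (b : Module.Basis ι k A) (g : M →ₗ[k] N) (h : ∀ i m, g (b i • m) = b i • g m)
    (a : A) (m : M) : g (a • m) = a • g m := by
  rw [← b.sum_repr_smul_smul a m, ← b.sum_repr_smul_smul a (g m)]
  simp [h]

noncomputable section Fl

variable (k : Type) [Field k] {A : Type} [Ring A] [Algebra k A]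
variable {M N : Type}
  [AddCommGroup M] [Module k M] [Module A M] [IsScalarTower k A M]
  [AddCommGroup N] [Module k N] [Module A N] [IsScalarTower k A N]
variable {d l : ℕ} (b : Module.Basis (Fin d) k A)

theorem genId_mem_genSub (j : Fin l) (x : polyR k d l ⊗[k] M) :
    genId k b j x ∈ genSub k b (M := M) :=
  Submodule.mem_iSup_of_mem j ⟨x, rfl⟩

theorem genId_one_tmul (j : Fin l) (m : M) :
    genId k b j ((1 : polyR k d l) ⊗ₜ m) =
      ∑ i, (X (i, j) : polyR k d l) • (1 ⊗ₜ (b i • m)) := by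
  simp [genId, actL]

theorem tensorCoeff_zero_genId (j : Fin l) (x : polyR k d l ⊗[k] M) :
    tensorCoeff 0 (genId k b j x) = 0 := by
  simp [genId, tensorCoeff_zero_X_smul]

theorem tensorCoeff_single_genId (i : Fin d) (j j' : Fin l) (x : polyR k d l ⊗[k] M) :
    tensorCoeff (Finsupp.single (i, j') 1) (genId k b j x) =
      if j = j' then b i • tensorCoeff 0 x else 0 := by
  simp only [genId, LinearMap.sum_apply, LinearMap.smul_apply, map_sum,
    tensorCoeff_single_X_smul, Prod.mk.injEq, tensorCoeff_baseChange]
  by_cases hj : j = j' <;> simp [hj, actL]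

theorem tensorCoeff_zero_of_mem_genSub {z : polyR k d l ⊗[k] M} (hz : z ∈ genSub k b) :
    tensorCoeff 0 z = 0 := by
  refine Submodule.iSup_induction _ (motive := fun z => tensorCoeff 0 z = 0) hz ?_ (map_zero _) ?_
  · rintro j _ ⟨y, rfl⟩
    exact tensorCoeff_zero_genId k b j y
  · intro x y hx hy
    rw [map_add, hx, hy, add_zero]

theorem exists_tensorCoeff_single_eq_smul_of_mem_genSub {z : polyR k d l ⊗[k] M}
    (hz : z ∈ genSub k b) :
    ∃ n : Fin l → M, ∀ i j, tensorCoeff (Finsupp.single (i, j) 1) z = b i • n j := by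
  refine Submodule.iSup_induction _ (motive := fun z => ∃ n : Fin l → M,
    ∀ i j, tensorCoeff (Finsupp.single (i, j) 1) z = b i • n j) hz ?_ ⟨0, by simp⟩ ?_
  · rintro j₀ _ ⟨y, rfl⟩
    refine ⟨Pi.single j₀ (tensorCoeff 0 y), fun i j => ?_⟩
    rw [tensorCoeff_single_genId]
    by_cases hj : j₀ = j
    · subst hj; simp
    · simp [hj, Ne.symm hj]
  · rintro x y ⟨n, hn⟩ ⟨n', hn'⟩
    exact ⟨n + n', fun i j => by rw [map_add, hn, hn', Pi.add_apply, smul_add]⟩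

def flOf : M →ₗ[k] polyR k d l ⊗[k] M ⧸ genSub k (l := l) b (M := M) :=
  (genSub k b).mkQ.restrictScalars k ∘ₗ TensorProduct.mk k (polyR k d l) M 1

theorem flOf_apply (m : M) :
    flOf k b (l := l) m = Submodule.Quotient.mk ((1 : polyR k d l) ⊗ₜ m) := rfl

theorem flOf_injective : Function.Injective (flOf k b (M := M) (l := l)) := by
  intro m m' h
  rw [flOf_apply, flOf_apply, Submodule.Quotient.eq, ← TensorProduct.tmul_sub] at h
  simpa [sub_eq_zero] using tensorCoeff_zero_of_mem_genSub k b h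

theorem mk_tmul_eq_smul_flOf (p : polyR k d l) (m : M) :
    (Submodule.Quotient.mk (p ⊗ₜ m) : polyR k d l ⊗[k] M ⧸ genSub k b) =
      p • flOf k b (l := l) m := by
  rw [flOf_apply, ← Submodule.Quotient.mk_smul, TensorProduct.smul_tmul', smul_eq_mul, mul_one]

theorem flComp_zero_eq_range_flOf :
    flComp k b (M := M) (l := l) 0 = LinearMap.range (flOf k b) := by
  apply le_antisymm
  · refine Submodule.span_le.mpr ?_
    rintro _ ⟨_, ⟨p, v, hp, rfl⟩, rfl⟩
    rw [mem_homogeneousSubmodule, ← totalDegree_zero_iff_isHomogeneous,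
      totalDegree_eq_zero_iff_eq_C] at hp
    obtain ⟨c, rfl⟩ : ∃ c, p = C c := ⟨_, hp⟩
    refine ⟨c • v, ?_⟩
    rw [map_smul, Submodule.mkQ_apply, mk_tmul_eq_smul_flOf, ← algebraMap_eq, algebraMap_smul]
  · rintro _ ⟨m, rfl⟩
    exact Submodule.subset_span ⟨_, ⟨1, m, isHomogeneous_one _ _, rfl⟩, rfl⟩

theorem linearMap_ext_flOf {Q : Type} [AddCommGroup Q] [Module (polyR k d l) Q] [Module k Q]
    [IsScalarTower k (polyR k d l) Q]
    {φ ψ : polyR k d l ⊗[k] M ⧸ genSub k (l := l) b →ₗ[polyR k d l] Q}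
    (h : ∀ m, φ (flOf k b (l := l) m) = ψ (flOf k b m)) : φ = ψ := by
  refine Submodule.linearMap_qext _ (TensorProduct.AlgebraTensorModule.ext fun p m => ?_)
  simpa [mk_tmul_eq_smul_flOf] using congrArg (p • ·) (h m)

theorem Fmap_mk_tmul (f : M →ₗ[A] N) (p : polyR k d l) (m : M) :
    Fmap k (l := l) b f (Submodule.Quotient.mk (p ⊗ₜ m)) = Submodule.Quotient.mk (p ⊗ₜ f m) :=
  rfl

theorem Fmap_flOf (f : M →ₗ[A] N) (m : M) :
    Fmap k (l := l) b f (flOf k b m) = flOf k b (f m) :=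
  rfl

theorem isGradedDegZero_Fmap (f : M →ₗ[A] N) : IsGradedDegZero k b (Fmap k (l := l) b f) := by
  intro n x hx
  refine (Submodule.span_le (p := (flComp k b n).comap ((Fmap k b f).restrictScalars k))).mpr
    ?_ hx
  rintro _ ⟨_, ⟨p, v, hp, rfl⟩, rfl⟩
  exact Submodule.subset_span ⟨_, ⟨p, f v, hp, rfl⟩, (Fmap_mk_tmul k b f p v).symm⟩

theorem exists_comp_flOf_eq_of_isGradedDegZero
    {φ : polyR k d l ⊗[k] M ⧸ genSub k (l := l) b →ₗ[polyR k d l]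
      polyR k d l ⊗[k] N ⧸ genSub k (l := l) b} (hφ : IsGradedDegZero k b φ) :
    ∃ g : M →ₗ[k] N, ∀ m, flOf k b (l := l) (g m) = φ (flOf k b m) := by
  have hrange : ∀ m, φ.restrictScalars k (flOf k b m) ∈ LinearMap.range (flOf k b (M := N)) := by
    intro m
    rw [← flComp_zero_eq_range_flOf]
    exact hφ 0 _ (by rw [flComp_zero_eq_range_flOf]; exact LinearMap.mem_range_self _ m)
  refine ⟨(LinearEquiv.ofInjective _ (flOf_injective k b)).symm.toLinearMap ∘ₗ
    (φ.restrictScalars k ∘ₗ flOf k b).codRestrict _ hrange, fun m => ?_⟩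
  simp

theorem sum_X_smul_flOf_basis_smul (j : Fin l) (m : M) :
    ∑ i, (X (i, j) : polyR k d l) • flOf k b (l := l) (b i • m) = 0 := by
  have : ∑ i, (X (i, j) : polyR k d l) • flOf k b (b i • m) =
      (genSub k b).mkQ (genId k b j ((1 : polyR k d l) ⊗ₜ m)) := by
    simp [genId_one_tmul, flOf_apply]
  rw [this, Submodule.mkQ_apply, Submodule.Quotient.mk_eq_zero]
  exact genId_mem_genSub k b j _

theorem exists_eq_smul_of_sum_X_smul_flOf_eq_zero (j : Fin l) {u : Fin d → M}
    (h : ∑ i, (X (i, j) : polyR k d l) • flOf k b (l := l) (u i) = 0) :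
    ∃ n, ∀ i, u i = b i • n := by
  classical
  have hmem : ∑ i, (X (i, j) : polyR k d l) ⊗ₜ[k] u i ∈ genSub k b := by
    rw [← Submodule.Quotient.mk_eq_zero, ← Submodule.mkQ_apply, ← h]
    simp [mk_tmul_eq_smul_flOf]
  obtain ⟨n, hn⟩ := exists_tensorCoeff_single_eq_smul_of_mem_genSub k b hmem
  refine ⟨n j, fun i => ?_⟩
  rw [← hn i j, map_sum]
  simp [coeff_X, Finsupp.single_left_inj one_ne_zero]

theorem map_basis_smul_of_flOf_comp (hl : 1 ≤ l)
    (φ : polyR k d l ⊗[k] M ⧸ genSub k (l := l) b →ₗ[polyR k d l]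
      polyR k d l ⊗[k] N ⧸ genSub k (l := l) b)
    {g : M →ₗ[k] N} (hg : ∀ m, flOf k b (l := l) (g m) = φ (flOf k b m)) (i : Fin d) (m : M) :
    g (b i • m) = b i • g m := by
  have hu : ∑ i, (X (i, ⟨0, hl⟩) : polyR k d l) •
      flOf k b (l := l) (g (b i • m) - b i • g m) = 0 := by
    simp_rw [map_sub, smul_sub, Finset.sum_sub_distrib, hg, ← map_smul, ← map_sum,
      sum_X_smul_flOf_basis_smul, map_zero, sub_zero]
  obtain ⟨n, hn⟩ := exists_eq_smul_of_sum_X_smul_flOf_eq_zero k b _ hu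
  have hn0 : n = 0 := by
    calc n = ∑ i, b.repr 1 i • b i • n := by rw [b.sum_repr_smul_smul, one_smul]
      _ = ∑ i, b.repr 1 i • (g (b i • m) - b i • g m) := by simp_rw [hn]
      _ = 0 := by
        simp_rw [smul_sub, Finset.sum_sub_distrib, b.sum_repr_smul_smul, one_smul, ← map_smul,
          ← map_sum, b.sum_repr_smul_smul, one_smul, sub_self]
  simpa [hn0, sub_eq_zero] using hn i

end Fl

theorem statement3_general (k : Type) [Field k] {A : Type} [Ring A] [Algebra k A]
    {d l : ℕ} (hl : 1 ≤ l) (b : Module.Basis (Fin d) k A)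
    (M N : Type)
    [AddCommGroup M] [Module k M] [Module A M] [IsScalarTower k A M]
    [AddCommGroup N] [Module k N] [Module A N] [IsScalarTower k A N] :
    (∀ f : M →ₗ[A] N, IsGradedDegZero k b (Fmap k (l := l) b f)) ∧
    (∀ φ : (polyR k d l ⊗[k] M ⧸ genSub k (l := l) b (M := M)) →ₗ[polyR k d l]
        (polyR k d l ⊗[k] N ⧸ genSub k (l := l) b (M := N)),
      IsGradedDegZero k b φ → ∃! f : M →ₗ[A] N, Fmap k (l := l) b f = φ) := by
  refine ⟨isGradedDegZero_Fmap k b, fun φ hφ => ?_⟩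
  obtain ⟨g, hg⟩ := exists_comp_flOf_eq_of_isGradedDegZero k b hφ
  let f : M →ₗ[A] N :=
    { g with
      map_smul' := g.map_smul_of_map_basis_smul b (map_basis_smul_of_flOf_comp k b hl φ hg) }
  refine ⟨f, linearMap_ext_flOf k b fun m => hg m, fun f' hf' => ?_⟩
  ext m
  apply flOf_injective k b (l := l)
  rw [← Fmap_flOf, hf']
  exact (hg m).symm

/-- For every `l ≥ 1`, the functor `F_l` is fully faithful as a functor into
graded `R`-modules with degree-0 homomorphisms: every induced map `F_l(f)` is graded of
degree `0`, and `f ↦ F_l(f)` is a bijection from `Hom_A(M, N)` onto the degree-0 graded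
homomorphisms `F_l(M) → F_l(N)`. -/
theorem statement3 (k : Type) [Field k] {A : Type} [Ring A] [Algebra k A]
    {d l : ℕ} (hl : 1 ≤ l) (b : Module.Basis (Fin d) k A)
    (M N : Type)
    [AddCommGroup M] [Module k M] [Module A M] [IsScalarTower k A M] [Module.Finite k M]
    [AddCommGroup N] [Module k N] [Module A N] [IsScalarTower k A N] [Module.Finite k N] :
    (∀ f : M →ₗ[A] N, IsGradedDegZero k b (Fmap k (l := l) b f)) ∧
    (∀ φ : (polyR k d l ⊗[k] M ⧸ genSub k (l := l) b (M := M)) →ₗ[polyR k d l]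
        (polyR k d l ⊗[k] N ⧸ genSub k (l := l) b (M := N)),
      IsGradedDegZero k b φ → ∃! f : M →ₗ[A] N, Fmap k (l := l) b f = φ) :=
  statement3_general k hl b M N
end

section
/- Let k be a field, n ≥ 1, R = k[x_{ij} : 1 ≤ i,j ≤ n] the polynomial ring in n² variables, and X = (x_{ij}) the generic n × n matrix over R. Then the annihilator of the R-module coker(X : R^n → R^n) is the principal ideal generated by det X, and this ideal is prime. -/
/-!
By Cramer's rule `det X` kills the cokernel; conversely, if `r` kills it then `X * B = r • 1` for
some `B`, so `r ^ n = det X * det B`. Hence the annihilator is `(det X)` as soon as this ideal is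
prime, i.e. as soon as `det X` is irreducible.

The generic determinant has degree at most one in each variable, involves every variable, and
`∂_w ∂_v det X = 0` whenever `v` and `w` share a row or a column. In a factorisation
`det X = f * g` every variable therefore occurs in exactly one factor, and two variables sharing a
row or a column occur in the same factor: otherwise `∂_w ∂_v (f * g) = ∂_v g * ∂_w f ≠ 0`. Rows and
columns connect all the variables, so one factor is constant.
-/

open MvPolynomial

namespace MvPolynomial

open Finsupp

section CommRing

variable {σ R : Type*} [CommRing R]

theorem pderiv_comm (v w : σ) (p : MvPolynomial σ R) :
    pderiv v (pderiv w p) = pderiv w (pderiv v p) := by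
  have h : ⁅pderiv v, pderiv w⁆ = (0 : Derivation R (MvPolynomial σ R) (MvPolynomial σ R)) :=
    derivation_ext fun i => by
      classical
      rw [Derivation.commutator_apply, pderiv_X, pderiv_X]
      simp [Pi.single_apply, apply_ite]
  rw [← sub_eq_zero, ← Derivation.commutator_apply, h, Derivation.zero_apply]

theorem pderiv_pderiv_eq_zero_of_forall_not_le {p : MvPolynomial σ R} {v w : σ}
    (h : ∀ m ∈ p.support, ¬ single v 1 + single w 1 ≤ m) : pderiv w (pderiv v p) = 0 := by
  ext m
  rw [coeff_pderiv, coeff_pderiv, coeff_zero, notMem_support_iff.1 fun hm => h _ hm ?_,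
    zero_mul, zero_mul]
  rw [add_assoc, add_comm]
  exact le_add_self

theorem notMem_vars_or_notMem_vars_of_degreeOf_mul_le_one [NoZeroDivisors R]
    {f g : MvPolynomial σ R} {v : σ}
    (hf : f ≠ 0) (hg : g ≠ 0) (h : degreeOf v (f * g) ≤ 1) : v ∉ f.vars ∨ v ∉ g.vars := by
  rw [degreeOf_mul_eq hf hg] at h
  simp only [mem_vars_iff_degreeOf_ne_zero, not_not]
  omega

theorem notMem_vars_of_pderiv_pderiv_mul_eq_zero [NoZeroDivisors R]
    {f g : MvPolynomial σ R} {v w : σ}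
    (hdeg : degreeOf w (f * g) ≤ 1) (hv : pderiv v (f * g) ≠ 0) (hw : pderiv w (f * g) ≠ 0)
    (hvw : pderiv w (pderiv v (f * g)) = 0) (hvf : v ∉ f.vars) : w ∉ f.vars := by
  have hf : f ≠ 0 := by rintro rfl; simp at hv
  have hg : g ≠ 0 := by rintro rfl; simp at hv
  intro hwf
  have hwg : w ∉ g.vars :=
    (notMem_vars_or_notMem_vars_of_degreeOf_mul_le_one hf hg hdeg).resolve_left (not_not.2 hwf)
  have hvg : pderiv v g ≠ 0 := by
    intro h0
    rw [Derivation.leibniz, pderiv_eq_zero_of_notMem_vars hvf, h0] at hv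
    simp at hv
  have hwf' : pderiv w f ≠ 0 := by
    intro h0
    rw [Derivation.leibniz, pderiv_eq_zero_of_notMem_vars hwg, h0] at hw
    simp at hw
  rw [Derivation.leibniz, pderiv_eq_zero_of_notMem_vars hvf, smul_zero, add_zero, smul_eq_mul,
    Derivation.leibniz, pderiv_comm, pderiv_eq_zero_of_notMem_vars hwg, map_zero, smul_zero,
    zero_add, smul_eq_mul] at hvw
  exact mul_ne_zero hvg hwf' hvw

end CommRing

section Field

variable {σ k : Type*} [Field k]

theorem isUnit_of_forall_notMem_vars {f : MvPolynomial σ k} (hf : f ≠ 0) (h : ∀ v, v ∉ f.vars) :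
    IsUnit f := by
  rw [vars_eq_empty_iff_eq_C.1 (Finset.eq_empty_of_forall_notMem h)] at hf ⊢
  exact (isUnit_iff_ne_zero.2 fun h0 => hf (by rw [h0, map_zero])).map C

theorem irreducible_of_degreeOf_le_one {p : MvPolynomial σ k} (v₀ : σ)
    (hdeg : ∀ v, degreeOf v p ≤ 1) (hder : ∀ v, pderiv v p ≠ 0)
    (hchain : ∀ v, Relation.ReflTransGen (fun v w => pderiv w (pderiv v p) = 0) v₀ v) :
    Irreducible p := by
  have isUnit_left : ∀ f g, p = f * g → v₀ ∉ f.vars → IsUnit f := by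
    rintro f g rfl hf₀
    refine isUnit_of_forall_notMem_vars (by rintro rfl; simpa using hder v₀) fun v => ?_
    induction hchain v with
    | refl => exact hf₀
    | tail _ hvw ih =>
      exact notMem_vars_of_pderiv_pderiv_mul_eq_zero (hdeg _) (hder _) (hder _) hvw ih
  refine ⟨fun hu => ?_, fun f g hfg => ?_⟩
  · obtain ⟨r, -, rfl⟩ := isUnit_iff_eq_C_of_isReduced.1 hu
    exact hder v₀ pderiv_C
  · have hf : f ≠ 0 := by rintro rfl; simpa [hfg] using hder v₀
    have hg : g ≠ 0 := by rintro rfl; simpa [hfg] using hder v₀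
    rcases notMem_vars_or_notMem_vars_of_degreeOf_mul_le_one hf hg (hfg ▸ hdeg v₀) with h | h
    · exact .inl (isUnit_left f g hfg h)
    · exact .inr (isUnit_left g f (hfg.trans (mul_comm f g)) h)

end Field

end MvPolynomial

namespace Matrix

section Cokernel

variable {m R : Type*} [Fintype m] [DecidableEq m] [CommRing R]

theorem det_mem_annihilator_coker (A : Matrix m m R) :
    A.det ∈ Module.annihilator R ((m → R) ⧸ LinearMap.range A.mulVecLin) := by
  rw [Submodule.annihilator_quotient, Submodule.mem_colon]
  exact fun b _ => ⟨cramer A b, mulVec_cramer A b⟩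

theorem exists_mul_eq_smul_one_of_mem_annihilator_coker {A : Matrix m m R} {r : R}
    (hr : r ∈ Module.annihilator R ((m → R) ⧸ LinearMap.range A.mulVecLin)) :
    ∃ B : Matrix m m R, A * B = r • 1 := by
  rw [Submodule.annihilator_quotient, Submodule.mem_colon] at hr
  choose w hw using fun j : m => hr (Pi.single j 1) trivial
  refine ⟨(of w)ᵀ, ext_of_mulVec_single fun j => ?_⟩
  rw [← mulVec_mulVec, mulVec_single_one, smul_mulVec, one_mulVec]
  exact hw j

theorem annihilator_coker_le_radical_span_det (A : Matrix m m R) :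
    Module.annihilator R ((m → R) ⧸ LinearMap.range A.mulVecLin) ≤
      (Ideal.span {A.det}).radical := by
  intro r hr
  obtain ⟨B, hAB⟩ := exists_mul_eq_smul_one_of_mem_annihilator_coker hr
  refine ⟨Fintype.card m, Ideal.mem_span_singleton'.2 ⟨B.det, ?_⟩⟩
  rw [mul_comm, ← det_mul, hAB, det_smul, det_one, mul_one]

theorem annihilator_coker_eq_span_det {A : Matrix m m R} (h : (Ideal.span {A.det}).IsRadical) :
    Module.annihilator R ((m → R) ⧸ LinearMap.range A.mulVecLin) = Ideal.span {A.det} :=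
  le_antisymm ((annihilator_coker_le_radical_span_det A).trans h)
    (Ideal.span_le.2 (Set.singleton_subset_iff.2 A.det_mem_annihilator_coker))

end Cokernel

variable {n R : Type*} [Fintype n] [DecidableEq n]

noncomputable def permExponent (σ : Equiv.Perm n) : n × n →₀ ℕ :=
  ∑ j, Finsupp.single (σ j, j) 1

theorem permExponent_apply (σ : Equiv.Perm n) (i j : n) :
    permExponent σ (i, j) = if σ j = i then 1 else 0 := by
  rw [permExponent, Finsupp.finsetSum_apply, Finset.sum_eq_single j]
  · simp [Finsupp.single_apply, Prod.ext_iff]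
  · intro j' _ hj'
    simp [Prod.ext_iff, hj']
  · simp

theorem permExponent_le_one (σ : Equiv.Perm n) (v : n × n) : permExponent σ v ≤ 1 := by
  rw [← Prod.mk.eta (p := v), permExponent_apply]
  split <;> simp

theorem permExponent_injective : Function.Injective (permExponent (n := n)) := by
  intro σ τ h
  ext j
  have := DFunLike.congr_fun h (τ j, j)
  rw [permExponent_apply, permExponent_apply, if_pos rfl] at this
  by_contra hne
  simp [hne] at this

theorem ne_and_ne_of_single_add_single_le_permExponent {σ : Equiv.Perm n} {i i' j j' : n}
    (h : Finsupp.single (i, j) 1 + Finsupp.single (i', j') 1 ≤ permExponent σ) :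
    i ≠ i' ∧ j ≠ j' := by
  have h₁ := h (i, j)
  have h₂ := h (i', j')
  simp only [Finsupp.coe_add, Pi.add_apply, Finsupp.single_apply] at h₁ h₂
  have hne : (i, j) ≠ (i', j') := by
    rintro heq
    simp only [heq, if_true] at h₂
    exact absurd (permExponent_le_one σ (i', j')) (by omega)
  have hσ : σ j = i ∧ σ j' = i' := by
    rw [permExponent_apply] at h₁ h₂
    constructor <;> by_contra hc <;> simp_all
  refine ⟨fun hi => hne ?_, fun hj => hne ?_⟩
  · rw [hi, σ.injective (hσ.1.trans (hi.trans hσ.2.symm))]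
  · rw [← hσ.1, ← hσ.2, hj]

variable [CommRing R]

theorem det_mvPolynomialX :
    (mvPolynomialX n n R).det = ∑ σ : Equiv.Perm n, monomial (permExponent σ) (σ.sign : R) := by
  rw [det_apply]
  refine Finset.sum_congr rfl fun σ _ => ?_
  simp only [mvPolynomialX_apply, X, ← monomial_sum_one, Units.smul_def, zsmul_eq_mul]
  rw [← map_intCast (C : R →+* MvPolynomial (n × n) R), C_mul_monomial, mul_one, permExponent]

theorem coeff_det_mvPolynomialX (d : n × n →₀ ℕ) :
    coeff d (mvPolynomialX n n R).det =
      ∑ σ : Equiv.Perm n, if permExponent σ = d then (σ.sign : R) else 0 := by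
  simp only [det_mvPolynomialX, coeff_sum, coeff_monomial]

theorem coeff_permExponent_det_mvPolynomialX (τ : Equiv.Perm n) :
    coeff (permExponent τ) (mvPolynomialX n n R).det = τ.sign := by
  rw [coeff_det_mvPolynomialX, Finset.sum_eq_single τ
    (fun σ _ h => if_neg (permExponent_injective.ne h)) (by simp), if_pos rfl]

theorem exists_permExponent_eq_of_mem_support_det {d : n × n →₀ ℕ}
    (hd : d ∈ (mvPolynomialX n n R).det.support) : ∃ σ, permExponent σ = d := by
  by_contra! h
  rw [MvPolynomial.mem_support_iff, coeff_det_mvPolynomialX] at hd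
  exact hd (Finset.sum_eq_zero fun σ _ => if_neg (h σ))

theorem degreeOf_det_mvPolynomialX_le_one (v : n × n) :
    degreeOf v (mvPolynomialX n n R).det ≤ 1 := by
  rw [degreeOf_le_iff]
  intro d hd
  obtain ⟨σ, rfl⟩ := exists_permExponent_eq_of_mem_support_det hd
  exact permExponent_le_one σ v

theorem pderiv_det_mvPolynomialX_ne_zero [Nontrivial R] (v : n × n) :
    pderiv v (mvPolynomialX n n R).det ≠ 0 := by
  obtain ⟨i, j⟩ := v
  have hτ : permExponent (Equiv.swap i j) (i, j) = 1 := by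
    rw [permExponent_apply, if_pos (Equiv.swap_apply_right i j)]
  intro h
  have := congr(coeff (permExponent (Equiv.swap i j) - Finsupp.single (i, j) 1) $h)
  rw [coeff_pderiv, tsub_add_cancel_of_le (Finsupp.single_le_iff.2 hτ.ge),
    coeff_permExponent_det_mvPolynomialX] at this
  rcases Int.units_eq_one_or (Equiv.swap i j).sign with hs | hs <;> simp [hs, hτ] at this

theorem pderiv_pderiv_det_mvPolynomialX_eq_zero {v w : n × n} (h : v.1 = w.1 ∨ v.2 = w.2) :
    pderiv w (pderiv v (mvPolynomialX n n R).det) = 0 := by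
  refine pderiv_pderiv_eq_zero_of_forall_not_le fun d hd hle => ?_
  obtain ⟨σ, rfl⟩ := exists_permExponent_eq_of_mem_support_det hd
  have := ne_and_ne_of_single_add_single_le_permExponent hle
  tauto

theorem irreducible_det_mvPolynomialX {k : Type*} [Field k] [Nonempty n] :
    Irreducible (mvPolynomialX n n k).det := by
  obtain ⟨i₀⟩ := ‹Nonempty n›
  refine irreducible_of_degreeOf_le_one (i₀, i₀) degreeOf_det_mvPolynomialX_le_one
    pderiv_det_mvPolynomialX_ne_zero fun v => ?_
  exact .tail (b := (i₀, v.2)) (.single (pderiv_pderiv_det_mvPolynomialX_eq_zero (.inl rfl)))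
    (pderiv_pderiv_det_mvPolynomialX_eq_zero (.inr rfl))

end Matrix

open Matrix

/-- Let `R = k[x_{ij}]` be the polynomial ring in `n²` variables and
`X = (x_{ij})` the generic `n × n` matrix.  Then the annihilator of the `R`-module
`coker(X : Rⁿ → Rⁿ)` is the principal ideal generated by `det X`, and this ideal is prime. -/
theorem statement4 (k : Type) [Field k] (n : ℕ) (hn : 1 ≤ n) :
    (Module.annihilator (MvPolynomial (Fin n × Fin n) k)
        ((Fin n → MvPolynomial (Fin n × Fin n) k) ⧸
          LinearMap.range (Matrix.mulVecLin
            (Matrix.of fun i j : Fin n => (MvPolynomial.X (i, j) :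
              MvPolynomial (Fin n × Fin n) k)))) =
      Ideal.span {(Matrix.of fun i j : Fin n => (MvPolynomial.X (i, j) :
        MvPolynomial (Fin n × Fin n) k)).det}) ∧
    (Ideal.span {(Matrix.of fun i j : Fin n => (MvPolynomial.X (i, j) :
        MvPolynomial (Fin n × Fin n) k)).det}).IsPrime := by
  have : Nonempty (Fin n) := ⟨⟨0, hn⟩⟩
  have hprime : (Ideal.span {(mvPolynomialX (Fin n) (Fin n) k).det}).IsPrime :=
    (Ideal.span_singleton_prime (det_mvPolynomialX_ne_zero _ _)).2
      irreducible_det_mvPolynomialX.prime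
  exact ⟨annihilator_coker_eq_span_det hprime.isRadical, hprime⟩
end
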